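/- arXiv:1908.08653 — 3 statements merged into one kernel-verified Lean document; each statement's English description precedes it below -/
import Mathlib

section
/- Let τ ∈ ℤ and let μ = (μ₁,…,μ_l) be a partition with l = l(μ) ≥ 3 parts. For each positive integer d dividing every part of μ, define K^τ_{μ/d} := (-1)^{(|μ|/d)τ}·(τ(τ+1))^{l−1}·(∏_{i=1}^{l} binom((μ_i/d)(τ+1) − 1, μ_i/d − 1))·(|μ|/d)^{l−3}. Then K^τ_{μ/d} is an integer, and the number n_{μ,0,|μ|/2}(τ) := (-1)^{l}·Σ_{d | gcd(μ₁,…,μ_l)} μ(d)·d^{l−1}·K^τ_{μ/d} is an integer. -/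
open Finset

/-- The generalized binomial coefficient `binom(z,k) = (∏_{j=0}^{k-1} (z-j)) / k!`, as a
rational number. -/
def qbinom (z : ℤ) (k : ℕ) : ℚ :=
  (∏ j ∈ Finset.range k, ((z : ℚ) - (j : ℚ))) / (Nat.factorial k : ℚ)

/-- `K^τ_{μ/d} = (-1)^{(|μ|/d)τ}·(τ(τ+1))^{l−1}·(∏_i binom((μ_i/d)(τ+1)−1, μ_i/d−1))·
(|μ|/d)^{l−3}`, the genus-0 open Gromov–Witten invariant at top a-degree. -/
noncomputable def Kres (τ : ℤ) {l : ℕ} (μp : Fin l → ℕ) (d : ℕ) : ℚ :=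
  (-1 : ℚ) ^ ((((∑ i, μp i) / d : ℕ) : ℤ) * τ) * ((τ * (τ + 1) : ℤ) : ℚ) ^ (l - 1) *
    (∏ i, qbinom (((μp i / d : ℕ) : ℤ) * (τ + 1) - 1) (μp i / d - 1)) *
    ((((∑ i, μp i) / d : ℕ) : ℚ)) ^ (l - 3)

theorem qbinom_eq_ringChoose (z : ℤ) (k : ℕ) : qbinom z k = (Ring.choose z k : ℤ) := by
  rw [qbinom, ← descPochhammer_eval_eq_prod_range,
    ← eq_intCast (Int.castRingHom ℚ) (Ring.choose z k), Ring.map_choose, Ring.choose_eq_smul,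
    smul_eq_mul, ← Polynomial.aeval_eq_smeval, Polynomial.aeval_def, ← Polynomial.eval_map,
    descPochhammer_map, div_eq_inv_mul]
  rfl

theorem Kres_eq_intCast (τ : ℤ) {l : ℕ} (μp : Fin l → ℕ) (d : ℕ) :
    Kres τ μp d = (((((∑ i, μp i) / d : ℕ) : ℤ) * τ).negOnePow * (τ * (τ + 1)) ^ (l - 1) *
      (∏ i, Ring.choose (((μp i / d : ℕ) : ℤ) * (τ + 1) - 1) (μp i / d - 1)) *
      (((∑ i, μp i) / d : ℕ) : ℤ) ^ (l - 3) : ℤ) := by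
  simp only [Kres, qbinom_eq_ringChoose, ← Int.cast_negOnePow, Int.cast_mul, Int.cast_pow,
    Int.cast_prod, Int.cast_natCast]

theorem stmt3_general (τ : ℤ) (l : ℕ) (μp : Fin l → ℕ) :
    (∀ d ∈ ((Finset.univ : Finset (Fin l)).gcd μp).divisors, ∃ z : ℤ, Kres τ μp d = (z : ℚ)) ∧
    ∃ N : ℤ,
      (-1 : ℚ) ^ l *
        ∑ d ∈ ((Finset.univ : Finset (Fin l)).gcd μp).divisors,
          (ArithmeticFunction.moebius d : ℚ) * (d : ℚ) ^ (l - 1) * Kres τ μp d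
      = (N : ℚ) := by
  choose K hK using fun d => (⟨_, Kres_eq_intCast τ μp d⟩ : ∃ z : ℤ, Kres τ μp d = z)
  refine ⟨fun d _ => ⟨K d, hK d⟩,
    (-1) ^ l * ∑ d ∈ ((Finset.univ : Finset (Fin l)).gcd μp).divisors,
      ArithmeticFunction.moebius d * (d : ℤ) ^ (l - 1) * K d, ?_⟩
  simp [hK]

/-- For a partition `μ` with `l(μ) ≥ 3` parts, each `K^τ_{μ/d}` is an integer and
`n_{μ,0,|μ|/2}(τ) = (-1)^l·Σ_{d | gcd(μ₁,…,μ_l)} μ(d)·d^{l−1}·K^τ_{μ/d}` is an integer. -/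
theorem stmt3 (τ : ℤ) (l : ℕ) (hl : 3 ≤ l) (μp : Fin l → ℕ)
    (hpos : ∀ i, 1 ≤ μp i) (hmono : ∀ i j : Fin l, i ≤ j → μp j ≤ μp i) :
    (∀ d ∈ ((Finset.univ : Finset (Fin l)).gcd μp).divisors, ∃ z : ℤ, Kres τ μp d = (z : ℚ)) ∧
    ∃ N : ℤ,
      (-1 : ℚ) ^ l *
        ∑ d ∈ ((Finset.univ : Finset (Fin l)).gcd μp).divisors,
          (ArithmeticFunction.moebius d : ℚ) * (d : ℚ) ^ (l - 1) * Kres τ μp d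
      = (N : ℚ) :=
  stmt3_general τ l μp
end

section
/- Let F be a field, let q ∈ F be nonzero, let H : ℕ → F be a sequence, let S ⊂ ℤ × ℕ be a finite set, and let c : S → F. Assume that for every n ≥ 0, Σ_{(i,j)∈S} c(i,j)·q^{n·i}·H(n+j) = 0. For each integer i, let Z_i denote the formal Laurent series Σ_{n≥0} H(n)·q^{n·i}·x^{n} ∈ F((x)). Then in F((x)) one has Σ_{(i,j)∈S} c(i,j)·q^{−ij}·x^{−j}·Z_i = Σ_{(i,j)∈S} c(i,j)·Σ_{k=1}^{j} H(j−k)·q^{−k·i}·x^{−k}. -/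
/-!
Multiplying `Z_i` by `x^{-j}` splits it into a principal part, built from the first `j`
coefficients `H 0, …, H (j - 1)`, and a power series with coefficients `H (m + j)`; the factor
`q^{-ij}` turns the `m`-th coefficient of the latter into `q^{mi} H (m + j)`. Summed over `S`,
the power series parts have as `m`-th coefficient the left side of the recurrence at `n = m`,
so only the principal parts survive.
-/

open Finset

namespace LaurentSeries

open HahnSeries

theorem C_mul_X_zpow {F : Type*} [Field F] (a : F) (n : ℤ) :
    HahnSeries.C a * (ofPowerSeries ℤ F PowerSeries.X : F⸨X⸩) ^ n = single n a := by
  rw [ofPowerSeries_X, ← RatFunc.single_zpow, C_apply, single_mul_single, zero_add, mul_one]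

theorem single_neg_mul_coe_mk {R : Type*} [Semiring R] (r : R) (a : ℕ → R) (j : ℕ) :
    single (-(j : ℤ)) r * ofPowerSeries ℤ R (PowerSeries.mk a) =
      ∑ k ∈ Icc 1 j, single (-(k : ℤ)) (r * a (j - k)) +
        ofPowerSeries ℤ R (PowerSeries.mk fun m => r * a (m + j)) := by
  ext g
  simp only [coeff_single_mul, coeff_add, coeff_sum, coeff_single, PowerSeries.coeff_coe,
    PowerSeries.coeff_mk, sub_neg_eq_add]
  rcases le_or_gt 0 g with hg | hg
  · lift g to ℕ using hg
    rw [sum_eq_zero fun k hk => ?_]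
    · rw [zero_add, if_neg (by omega), if_neg (by omega), ← Nat.cast_add, Int.natAbs_natCast,
        Int.natAbs_natCast]
    · exact if_neg (by grind)
  · obtain ⟨n, rfl⟩ := Int.exists_eq_neg_ofNat hg.le
    simp only [neg_inj, Nat.cast_inj, sum_ite_eq, mem_Icc]
    rw [if_pos hg, add_zero]
    by_cases hnj : n ≤ j
    · rw [if_neg (by omega), if_pos (by omega), show (-(n : ℤ) + j).natAbs = j - n by omega]
    · rw [if_pos (by omega), if_neg (by omega), mul_zero]

theorem C_mul_X_zpow_neg_mul_coe_mk_twist {F : Type*} [Field F] {q : F} (hq : q ≠ 0)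
    (H : ℕ → F) (r : F) (i : ℤ) (j : ℕ) :
    HahnSeries.C (r * q ^ (-(i * j))) * (ofPowerSeries ℤ F PowerSeries.X : F⸨X⸩) ^ (-(j : ℤ)) *
        ofPowerSeries ℤ F (PowerSeries.mk fun n => H n * q ^ ((n : ℤ) * i)) =
      ∑ k ∈ Icc 1 j, single (-(k : ℤ)) (r * (H (j - k) * q ^ (-(k : ℤ) * i))) +
        ofPowerSeries ℤ F (PowerSeries.mk fun m => r * q ^ ((m : ℤ) * i) * H (m + j)) := by
  have shift (n : ℤ) : q ^ (-(i * j)) * q ^ (n * i) = q ^ ((n - j) * i) := by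
    rw [← zpow_add₀ hq]
    ring_nf
  rw [C_mul_X_zpow, single_neg_mul_coe_mk]
  congr 1
  · refine sum_congr rfl fun k hk => ?_
    rw [mul_left_comm, mul_assoc, shift, Nat.cast_sub (mem_Icc.mp hk).2]
    ring_nf
  · congr 1
    ext m
    rw [PowerSeries.coeff_mk, PowerSeries.coeff_mk, mul_left_comm, mul_assoc, shift,
      Nat.cast_add, add_sub_cancel_right]
    ring

theorem sum_coe_mk_eq_zero {R ι : Type*} [Semiring R] {s : Finset ι} {f : ι → ℕ → R}
    (hf : ∀ m, ∑ i ∈ s, f i m = 0) :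
    ∑ i ∈ s, ofPowerSeries ℤ R (PowerSeries.mk (f i)) = 0 := by
  rw [← map_sum, ← map_zero (ofPowerSeries ℤ R)]
  congr 1
  ext m
  simp only [map_sum, PowerSeries.coeff_mk, hf, map_zero]

end LaurentSeries

open LaurentSeries in
/-- If the noncommutative polynomial `Â(M,L) = Σ_{(i,j)∈S} c(i,j) M^i L^j` (acting by
`M·H_n = q^n H_n`, `L·H_n = H_{n+1}`) annihilates the sequence `H`, then applying
`Â(ŷ, x̂⁻¹)` to the generating function `Z(x) = Σ_{n≥0} H(n) x^n` — i.e. forming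
`Σ_{(i,j)∈S} c(i,j)·q^{−ij}·x^{−j}·Z_i` with `Z_i = Σ_{n≥0} H(n) q^{ni} x^n` — yields the
principal part `Σ_{(i,j)∈S} c(i,j)·Σ_{k=1}^{j} H(j−k)·q^{−ki}·x^{−k}` in `F((x))`. -/
theorem stmt6 (F : Type*) [Field F] (q : F) (hq : q ≠ 0) (H : ℕ → F)
    (S : Finset (ℤ × ℕ)) (c : ℤ × ℕ → F)
    (hrec : ∀ n : ℕ, ∑ p ∈ S, c p * q ^ ((n : ℤ) * p.1) * H (n + p.2) = 0) :
    ∑ p ∈ S,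
        HahnSeries.C (c p * q ^ (-(p.1 * (p.2 : ℤ)))) *
          ((HahnSeries.ofPowerSeries ℤ F PowerSeries.X : LaurentSeries F) ^ (-(p.2 : ℤ))) *
          (HahnSeries.ofPowerSeries ℤ F (PowerSeries.mk fun n => H n * q ^ ((n : ℤ) * p.1)))
      = ∑ p ∈ S,
          HahnSeries.C (c p) *
            ∑ k ∈ Finset.Icc 1 p.2,
              HahnSeries.C (H (p.2 - k) * q ^ (-(k : ℤ) * p.1)) *
                ((HahnSeries.ofPowerSeries ℤ F PowerSeries.X : LaurentSeries F) ^ (-(k : ℤ))) := by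
  rw [sum_congr rfl fun p _ => C_mul_X_zpow_neg_mul_coe_mk_twist hq H (c p) p.1 p.2,
    sum_add_distrib, sum_coe_mk_eq_zero hrec, add_zero]
  simp only [C_mul_X_zpow, mul_sum]
  simp only [HahnSeries.C_apply, HahnSeries.single_mul_single, zero_add]
end

section
/- Let τ ∈ ℤ and let R = ℚ[a] be the polynomial ring in one variable a. There exists a unique formal power series Y ∈ R[[X]] with zero constant term satisfying Y = X·(1−Y)^{τ}·(1 − a(1−Y)), where (1−Y)^{τ} denotes the τ-th power of the unit 1−Y of R[[X]] (its inverse power when τ < 0). Moreover, for every n ≥ 1 the coefficient of X^{n} in Y equals −(1/n)·Σ_{i=0}^{n} (−1)^{n+i}·binom(n,i)·binom(nτ+i, n−1)·a^{i}. -/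
open Finset

/-- The coefficient ring `R = ℚ[a]`. -/
abbrev Rq : Type := Polynomial ℚ

/-- `Y ∈ R[[X]]` has zero constant term and satisfies the mirror curve equation
`Y = X·(1−Y)^τ·(1 − a(1−Y))`, where `(1−Y)^τ` is the `τ`-th power of the unit `1−Y`. -/
def MirrorEq (τ : ℤ) (Y : PowerSeries Rq) : Prop :=
  PowerSeries.constantCoeff Y = 0 ∧
    ∀ u : (PowerSeries Rq)ˣ, (u : PowerSeries Rq) = 1 - Y →
      Y = PowerSeries.X * ((u ^ τ : (PowerSeries Rq)ˣ) : PowerSeries Rq) *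
        (1 - PowerSeries.C Polynomial.X * (1 - Y))

/-!
With `φ(w) = (1 - w)^τ (1 - a(1 - w))` the equation reads `Y = X φ(Y)`.
The right-hand side raises the `X`-adic valuation of differences by one, which gives existence
and uniqueness of `Y` by iteration. For the coefficients we use Lagrange inversion
`n [Xⁿ] Y = [wⁿ⁻¹] φ(w)ⁿ`, proved by the residue computation `[Xˢ] G⁻ˢ⁻¹ (X G)' = δ_{s,0}` after
passing to the fraction field of `ℚ[a]`, where `G = φ(Y)` becomes a unit. Expanding
`φ(w)ⁿ = Σᵢ binom(n,i) (-a)ⁱ (1 - w)^(nτ+i)` with the binomial series of `(1 - w)^(nτ+i)` gives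
the formula.
-/

theorem qbinom_eq_choose (z : ℤ) (k : ℕ) : qbinom z k = Ring.choose z k := by
  have h := Ring.descPochhammer_eq_factorial_smul_choose z k
  rw [← Polynomial.eval_eq_smeval, descPochhammer_eval_eq_prod_range, nsmul_eq_mul] at h
  rw [qbinom, div_eq_iff (by positivity), mul_comm]
  exact_mod_cast h

theorem Units.val_zpow_eq_pow_mul_inverse_pow {M₀ : Type*} [MonoidWithZero M₀] (u : M₀ˣ)
    (m : ℤ) : ((u ^ m : M₀ˣ) : M₀) = (u : M₀) ^ m.toNat * Ring.inverse (u : M₀) ^ (-m).toNat := by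
  rw [Ring.inverse_unit, ← Units.val_pow_eq_pow_val, ← Units.val_pow_eq_pow_val, ← Units.val_mul,
    ← zpow_natCast, ← zpow_natCast, inv_zpow', ← zpow_add]
  congr 2
  omega

theorem Ring.inverse_sModEq {A : Type*} [CommRing A] {I : Ideal A} {a b : A} (ha : IsUnit a)
    (hb : IsUnit b) (h : a ≡ b [SMOD I]) : Ring.inverse a ≡ Ring.inverse b [SMOD I] := by
  have := (SModEq.rfl (x := Ring.inverse a)).mul (h.symm.mul (SModEq.rfl (x := Ring.inverse b)))
  rwa [Ring.mul_inverse_cancel b hb, mul_one, ← mul_assoc, Ring.inverse_mul_cancel a ha,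
    one_mul] at this

section BinomialSeries

variable {A : Type*} [CommRing A]

theorem sum_range_succ_choose_add_one_smul (v : A) (n : ℕ) (m : ℤ) :
    ∑ k ∈ range (n + 1), Ring.choose (m + 1) k • v ^ k =
      ∑ k ∈ range (n + 1), Ring.choose m k • v ^ k +
        v * ∑ k ∈ range n, Ring.choose m k • v ^ k := by
  simp only [sum_range_succ' _ n, Ring.choose_succ_succ, add_smul, sum_add_distrib, mul_sum,
    Ring.choose_zero_right, mul_smul_comm, ← pow_succ']
  ring

theorem Units.pow_dvd_val_zpow_sub_sum_choose (u : Aˣ) {v : A} (hu : (u : A) = 1 + v) (n : ℕ)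
    (m : ℤ) : v ^ n ∣ ((u ^ m : Aˣ) : A) - ∑ k ∈ range n, Ring.choose m k • v ^ k := by
  induction n generalizing m with
  | zero => simp
  | succ n ihn =>
    have step (m : ℤ) : v ^ (n + 1) ∣ ((u ^ (m + 1) : Aˣ) : A) -
          ∑ k ∈ range (n + 1), Ring.choose (m + 1) k • v ^ k ↔
        v ^ (n + 1) ∣ ((u ^ m : Aˣ) : A) - ∑ k ∈ range (n + 1), Ring.choose m k • v ^ k := by
      have hv : v ^ (n + 1) ∣ v * (((u ^ m : Aˣ) : A) - ∑ k ∈ range n, Ring.choose m k • v ^ k) :=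
        pow_succ' v n ▸ mul_dvd_mul_left v (ihn m)
      convert dvd_add_left hv using 2
      rw [zpow_add_one, Units.val_mul, hu, sum_range_succ_choose_add_one_smul]
      ring
    induction m using Int.induction_on with
    | zero => simp [sum_range_succ', Ring.choose_zero_succ]
    | succ i ih => exact (step i).2 ih
    | pred i ih => exact (step (-i - 1)).1 (by rwa [sub_add_cancel])

end BinomialSeries

namespace PowerSeries

section FixedPoint

variable {R : Type*} [CommRing R]

theorem coeff_eq_of_X_pow_dvd_sub {n j : ℕ} {f g : R⟦X⟧} (h : X ^ n ∣ f - g) (hj : j < n) :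
    coeff j f = coeff j g :=
  sub_eq_zero.mp <| by simpa using X_pow_dvd_iff.mp h j hj

theorem existsUnique_fixedPoint_of_contraction {F : R⟦X⟧ → R⟦X⟧} (hF : ∀ f, X ∣ F f)
    (hcontr : ∀ n f g, X ∣ f → X ∣ g → X ^ n ∣ f - g → X ^ (n + 1) ∣ F f - F g) :
    ∃! Y, F Y = Y := by
  have close (n : ℕ) {f g : R⟦X⟧} (hf : F f = f) (hg : F g = g) : X ^ n ∣ f - g := by
    induction n with
    | zero => simp
    | succ n ih => rw [← hf, ← hg]; exact hcontr n f g (hf ▸ hF f) (hg ▸ hF g) ih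
  set S : ℕ → R⟦X⟧ := fun m => F^[m] 0
  have hS_succ (m : ℕ) : S (m + 1) = F (S m) := Function.iterate_succ_apply' F m 0
  have hX_dvd_S (m : ℕ) : X ∣ S m := by
    cases m with
    | zero => exact dvd_zero X
    | succ m => rw [hS_succ]; exact hF _
  have hS_stable (m k : ℕ) : X ^ m ∣ S (m + k) - S m := by
    induction m with
    | zero => simp
    | succ m ih =>
      rw [Nat.add_right_comm, hS_succ, hS_succ]
      exact hcontr m _ _ (hX_dvd_S _) (hX_dvd_S _) ih
  set Y : R⟦X⟧ := mk fun n => coeff n (S (n + 1))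
  have hY_sub (m : ℕ) : X ^ m ∣ Y - S m := by
    refine X_pow_dvd_iff.mpr fun j hj => ?_
    obtain ⟨k, rfl⟩ := Nat.exists_eq_add_of_lt hj
    rw [Nat.add_right_comm, map_sub, coeff_mk,
      coeff_eq_of_X_pow_dvd_sub (hS_stable (j + 1) k) j.lt_succ_self, sub_self]
  have hX_dvd_Y : X ∣ Y := (dvd_sub_left (hX_dvd_S 1)).mp (by simpa using hY_sub 1)
  have hY_fixed : F Y = Y := by
    ext n
    rw [coeff_eq_of_X_pow_dvd_sub (hcontr n _ _ hX_dvd_Y (hX_dvd_S n) (hY_sub n)) n.lt_succ_self,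
      ← hS_succ, coeff_mk]
  refine ⟨Y, hY_fixed, fun Z hZ => ?_⟩
  ext n
  exact coeff_eq_of_X_pow_dvd_sub (close (n + 1) hZ hY_fixed) n.lt_succ_self

end FixedPoint

section LagrangeInversion

variable {R : Type*} [CommRing R] [IsAddTorsionFree R]

theorem coeff_inv_pow_succ_mul_derivative_X_mul (g : R⟦X⟧ˣ) (s : ℕ) :
    coeff s ((↑g⁻¹ : R⟦X⟧) ^ (s + 1) * d⁄dX R (X * (g : R⟦X⟧))) = if s = 0 then 1 else 0 := by
  set H : R⟦X⟧ := ↑g⁻¹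
  have hHg : H * g = 1 := g.inv_mul
  have expand : H ^ (s + 1) * d⁄dX R (X * (g : R⟦X⟧)) =
      H ^ s + X * (H ^ (s + 1) * d⁄dX R (g : R⟦X⟧)) := by
    rw [Derivation.leibniz, derivative_X, smul_eq_mul, smul_eq_mul, mul_one]
    linear_combination H ^ s * hHg
  rw [expand, map_add]
  cases s with
  | zero => simp
  | succ t =>
    rw [if_neg t.succ_ne_zero, coeff_succ_X_mul]
    -- `[Xᵗ⁺¹] Hᵗ⁺¹` is read off the derivative `(Hᵗ⁺¹)' = -(t+1) Hᵗ⁺² g'`.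
    have hderiv : d⁄dX R (H ^ (t + 1)) =
        -((t + 1 : ℕ) * (H ^ (t + 2) * d⁄dX R (g : R⟦X⟧))) := by
      rw [Derivation.leibniz_pow, derivative_inv, smul_eq_mul, nsmul_eq_mul]
      push_cast
      ring
    have hcoeff := congrArg (coeff t) hderiv
    rw [coeff_derivative, map_neg, ← nsmul_eq_mul, map_nsmul] at hcoeff
    refine (nsmul_eq_zero_iff_right t.succ_ne_zero).mp ?_
    rw [nsmul_eq_mul]
    push_cast
    linear_combination hcoeff

theorem coeff_inv_pow_succ_mul_pow_mul_derivative (g : R⟦X⟧ˣ) {Y : R⟦X⟧}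
    (hY : Y = X * (g : R⟦X⟧)) {n k : ℕ} (hk : k ≤ n) :
    coeff n ((↑g⁻¹ : R⟦X⟧) ^ (n + 1) * Y ^ k * d⁄dX R Y) = if k = n then 1 else 0 := by
  obtain ⟨j, rfl⟩ := Nat.exists_eq_add_of_le hk
  have hsplit : (↑g⁻¹ : R⟦X⟧) ^ (k + j + 1) * Y ^ k = X ^ k * (↑g⁻¹ : R⟦X⟧) ^ (j + 1) := by
    have hcancel : ((↑g⁻¹ : R⟦X⟧) * g) ^ k = 1 := by rw [g.inv_mul, one_pow]
    rw [hY]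
    linear_combination X ^ k * (↑g⁻¹ : R⟦X⟧) ^ (j + 1) * hcancel
  rw [hsplit, mul_assoc, add_comm k j, coeff_X_pow_mul, hY,
    coeff_inv_pow_succ_mul_derivative_X_mul]
  simp

theorem succ_mul_coeff_succ_eq_of_X_pow_dvd_of_isUnit (g : R⟦X⟧ˣ) {Y : R⟦X⟧}
    (hY : Y = X * (g : R⟦X⟧)) (n : ℕ) (c : ℕ → R)
    (h : X ^ (n + 1) ∣ (g : R⟦X⟧) ^ (n + 1) - ∑ k ∈ range (n + 1), C (c k) * Y ^ k) :
    (n + 1) * coeff (n + 1) Y = c n := by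
  obtain ⟨σ, hσ⟩ := h
  set H : R⟦X⟧ := ↑g⁻¹
  have hHg : H ^ (n + 1) * (g : R⟦X⟧) ^ (n + 1) = 1 := by rw [← mul_pow, g.inv_mul, one_pow]
  have hdY : d⁄dX R Y = ∑ k ∈ range (n + 1), C (c k) * (H ^ (n + 1) * Y ^ k * d⁄dX R Y) +
      X ^ (n + 1) * (H ^ (n + 1) * σ * d⁄dX R Y) := by
    rw [sub_eq_iff_eq_add'] at hσ
    calc d⁄dX R Y = H ^ (n + 1) * (g : R⟦X⟧) ^ (n + 1) * d⁄dX R Y := by rw [hHg, one_mul]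
      _ = _ := by
        rw [hσ, mul_add, add_mul, mul_sum, sum_mul]
        congr 1
        · exact sum_congr rfl fun k _ => by ring
        · ring
  rw [mul_comm, ← coeff_derivative, hdY, map_add, coeff_X_pow_mul', if_neg (by omega), add_zero,
    map_sum, sum_eq_single_of_mem n (self_mem_range_succ n) fun k hk hkn => ?_]
  · rw [coeff_C_mul, coeff_inv_pow_succ_mul_pow_mul_derivative g hY le_rfl, if_pos rfl, mul_one]
  · rw [coeff_C_mul, coeff_inv_pow_succ_mul_pow_mul_derivative g hY (mem_range_succ_iff.mp hk),
      if_neg hkn, mul_zero]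

end LagrangeInversion

theorem succ_mul_coeff_succ_eq_of_X_pow_dvd {R : Type*} [CommRing R] [IsDomain R] [CharZero R]
    {Y G : R⟦X⟧} (hY : Y = X * G) (hG : constantCoeff G ≠ 0) (n : ℕ) (c : ℕ → R)
    (h : X ^ (n + 1) ∣ G ^ (n + 1) - ∑ k ∈ range (n + 1), C (c k) * Y ^ k) :
    (n + 1) * coeff (n + 1) Y = c n := by
  have hinj := IsFractionRing.injective R (FractionRing R)
  have hG_unit : IsUnit (map (algebraMap R (FractionRing R)) G) := by
    rw [isUnit_iff_constantCoeff, ← coeff_zero_eq_constantCoeff_apply, coeff_map,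
      coeff_zero_eq_constantCoeff_apply]
    exact ((map_ne_zero_iff _ hinj).mpr hG).isUnit
  apply hinj
  have := succ_mul_coeff_succ_eq_of_X_pow_dvd_of_isUnit hG_unit.unit
    (Y := map (algebraMap R (FractionRing R)) Y) (by rw [hG_unit.unit_spec, hY, map_mul, map_X])
    n (algebraMap R (FractionRing R) ∘ c)
    (by simpa using map_dvd (map (algebraMap R (FractionRing R))) h)
  simpa [coeff_map] using this

theorem isUnit_one_sub_of_X_dvd {R : Type*} [CommRing R] {Z : R⟦X⟧} (hZ : X ∣ Z) :
    IsUnit (1 - Z) := by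
  rw [isUnit_iff_constantCoeff, map_sub, map_one, X_dvd_iff.mp hZ, sub_zero]
  exact isUnit_one

end PowerSeries

open PowerSeries

section MirrorCurve

variable {R : Type*} [CommRing R]

/-- `Z ↦ X (1 - Z)^τ (1 - a(1 - Z))`, made total by `Ring.inverse` (junk unless `1 - Z` is a
unit). -/
noncomputable def mirrorMap (a : R) (τ : ℤ) (Z : R⟦X⟧) : R⟦X⟧ :=
  X * ((1 - Z) ^ τ.toNat * Ring.inverse (1 - Z) ^ (-τ).toNat * (1 - C a * (1 - Z)))

theorem X_dvd_mirrorMap (a : R) (τ : ℤ) (Z : R⟦X⟧) : X ∣ mirrorMap a τ Z :=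
  dvd_mul_right _ _

theorem mirrorMap_eq (a : R) (τ : ℤ) (u : R⟦X⟧ˣ) {Z : R⟦X⟧} (hu : (u : R⟦X⟧) = 1 - Z) :
    mirrorMap a τ Z = X * (((u ^ τ : R⟦X⟧ˣ) : R⟦X⟧) * (1 - C a * (u : R⟦X⟧))) := by
  rw [mirrorMap, Units.val_zpow_eq_pow_mul_inverse_pow, hu]

theorem mirrorMap_contraction (a : R) (τ : ℤ) (n : ℕ) (f g : R⟦X⟧) (hf : X ∣ f) (hg : X ∣ g)
    (hfg : X ^ n ∣ f - g) : X ^ (n + 1) ∣ mirrorMap a τ f - mirrorMap a τ g := by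
  have hdvd_iff (x y : R⟦X⟧) : X ^ n ∣ x - y ↔ x ≡ y [SMOD Ideal.span {X ^ n}] := by
    rw [SModEq.sub_mem, Ideal.mem_span_singleton]
  have h₁ : 1 - f ≡ 1 - g [SMOD Ideal.span {X ^ n}] := SModEq.rfl.sub ((hdvd_iff f g).mp hfg)
  have h₂ := ((h₁.pow τ.toNat).mul
    ((Ring.inverse_sModEq (isUnit_one_sub_of_X_dvd hf) (isUnit_one_sub_of_X_dvd hg) h₁).pow
      (-τ).toNat)).mul
    (SModEq.rfl.sub (SModEq.rfl.mul h₁) : 1 - C a * (1 - f) ≡ 1 - C a * (1 - g) [SMOD _])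
  rw [mirrorMap, mirrorMap, ← mul_sub, pow_succ']
  exact mul_dvd_mul_left X ((hdvd_iff _ _).mpr h₂)

/-- The coefficient of `wᵏ` in `((1 - w)^τ (1 - a(1 - w)))ᴺ`. -/
def phiPowCoeff (a : R) (τ : ℤ) (N k : ℕ) : R :=
  ∑ i ∈ range (N + 1), ((-1) ^ k * N.choose i * Ring.choose ((N : ℤ) * τ + i) k : ℤ) * (-a) ^ i

theorem X_pow_dvd_mirror_pow_sub (a : R) (τ : ℤ) (u : R⟦X⟧ˣ) {Y : R⟦X⟧}
    (hu : (u : R⟦X⟧) = 1 - Y) (hY : X ∣ Y) (N : ℕ) :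
    X ^ N ∣ (((u ^ τ : R⟦X⟧ˣ) : R⟦X⟧) * (1 - C a * (u : R⟦X⟧))) ^ N -
      ∑ k ∈ range N, C (phiPowCoeff a τ N k) * Y ^ k := by
  have hexpand : (((u ^ τ : R⟦X⟧ˣ) : R⟦X⟧) * (1 - C a * (u : R⟦X⟧))) ^ N =
      ∑ i ∈ range (N + 1), C ((N.choose i : R) * (-a) ^ i) * (u ^ ((N : ℤ) * τ + i) : R⟦X⟧ˣ) := by
    rw [mul_pow, sub_eq_neg_add, add_pow, mul_sum]
    refine sum_congr rfl fun i _ => ?_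
    rw [zpow_add, mul_comm (N : ℤ), zpow_mul, zpow_natCast, zpow_natCast, Units.val_mul,
      Units.val_pow_eq_pow_val, Units.val_pow_eq_pow_val]
    simp only [map_mul, map_pow, map_neg, map_natCast, one_pow, mul_one]
    ring
  have hregroup : ∑ k ∈ range N, C (phiPowCoeff a τ N k) * Y ^ k =
      ∑ i ∈ range (N + 1), C ((N.choose i : R) * (-a) ^ i) *
        ∑ k ∈ range N, Ring.choose ((N : ℤ) * τ + i) k • (-Y) ^ k := by
    simp only [phiPowCoeff, map_sum, sum_mul, mul_sum]
    rw [sum_comm]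
    refine sum_congr rfl fun i _ => sum_congr rfl fun k _ => ?_
    simp only [map_mul, map_pow, map_neg, map_natCast, map_intCast, map_one, zsmul_eq_mul,
      Int.cast_mul, Int.cast_pow, Int.cast_neg, Int.cast_one, Int.cast_natCast]
    ring
  rw [hexpand, hregroup, ← sum_sub_distrib]
  refine dvd_sum fun i _ => ?_
  rw [← mul_sub]
  exact dvd_mul_of_dvd_right ((pow_dvd_pow_of_dvd (dvd_neg.mpr hY) N).trans
    (Units.pow_dvd_val_zpow_sub_sum_choose u (by rw [hu, sub_eq_add_neg]) N _)) _

theorem succ_mul_coeff_succ_of_mirrorMap_eq [IsDomain R] [CharZero R] {a : R} (ha : a ≠ 1)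
    {τ : ℤ} {Y : R⟦X⟧} (hY : mirrorMap a τ Y = Y) (n : ℕ) :
    (n + 1) * coeff (n + 1) Y = phiPowCoeff a τ (n + 1) n := by
  have hX : X ∣ Y := hY ▸ X_dvd_mirrorMap a τ Y
  obtain ⟨u, hu⟩ := isUnit_one_sub_of_X_dvd hX
  have hu_cc : Units.map (constantCoeff : R⟦X⟧ →+* R).toMonoidHom u = 1 :=
    Units.ext (by simp [hu, X_dvd_iff.mp hX])
  have hcc : constantCoeff ((u ^ τ : R⟦X⟧ˣ) : R⟦X⟧) = 1 := by
    change ((Units.map (constantCoeff : R⟦X⟧ →+* R).toMonoidHom (u ^ τ) : Rˣ) : R) = 1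
    rw [map_zpow, hu_cc, one_zpow, Units.val_one]
  refine succ_mul_coeff_succ_eq_of_X_pow_dvd (by rw [← mirrorMap_eq a τ u hu, hY]) ?_ n _
    (X_pow_dvd_mirror_pow_sub a τ u hu hX (n + 1))
  rw [map_mul, hcc, one_mul, map_sub, map_one, map_mul, constantCoeff_C, hu, map_sub, map_one,
    X_dvd_iff.mp hX, sub_zero, mul_one]
  exact sub_ne_zero.mpr ha.symm

end MirrorCurve

theorem mirrorEq_iff_mirrorMap_eq (τ : ℤ) (Y : PowerSeries Rq) :
    MirrorEq τ Y ↔ mirrorMap Polynomial.X τ Y = Y := by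
  constructor
  · rintro ⟨hcc, h⟩
    obtain ⟨u, hu⟩ := isUnit_one_sub_of_X_dvd (X_dvd_iff.mpr hcc)
    rw [mirrorMap_eq (Polynomial.X : Rq) τ u hu, hu, ← mul_assoc]
    exact (h u hu).symm
  · intro hY
    refine ⟨X_dvd_iff.mp (hY ▸ X_dvd_mirrorMap _ τ Y), fun u hu => ?_⟩
    rw [mul_assoc, ← hu, ← mirrorMap_eq (Polynomial.X : Rq) τ u hu, hY]

theorem phiPowCoeff_X_succ (τ : ℤ) (m : ℕ) :
    phiPowCoeff (Polynomial.X : Rq) τ (m + 1) m =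
      -∑ i ∈ range (m + 1 + 1),
        Polynomial.C ((-1 : ℚ) ^ (m + 1 + i) * qbinom ((m + 1 : ℕ) : ℤ) i *
          qbinom (((m + 1 : ℕ) : ℤ) * τ + (i : ℤ)) m) * Polynomial.X ^ i := by
  rw [phiPowCoeff, ← sum_neg_distrib]
  refine sum_congr rfl fun i _ => ?_
  simp only [qbinom_eq_choose, Ring.choose_natCast, map_mul, map_pow, map_neg, map_one,
    map_natCast, map_intCast, Int.cast_mul, Int.cast_pow, Int.cast_neg, Int.cast_one,
    Int.cast_natCast]
  ring

/-- There is a unique power series `Y` with zero constant term solving the mirror curve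
equation `Y = X(1−Y)^τ(1−a(1−Y))`, and its coefficient of `X^n` (for `n ≥ 1`) equals
`−(1/n)·Σ_{i=0}^{n} (−1)^{n+i}·binom(n,i)·binom(nτ+i, n−1)·a^i`. -/
theorem stmt7 (τ : ℤ) :
    (∃! Y : PowerSeries Rq, MirrorEq τ Y) ∧
    ∀ Y : PowerSeries Rq, MirrorEq τ Y → ∀ n : ℕ, 1 ≤ n →
      PowerSeries.coeff n Y =
        Polynomial.C (-(1 / (n : ℚ))) *
          ∑ i ∈ Finset.range (n + 1),
            Polynomial.C ((-1 : ℚ) ^ (n + i) * qbinom (n : ℤ) i *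
                qbinom ((n : ℤ) * τ + (i : ℤ)) (n - 1)) *
              Polynomial.X ^ i := by
  refine ⟨(existsUnique_congr (mirrorEq_iff_mirrorMap_eq τ)).mpr
    (existsUnique_fixedPoint_of_contraction (X_dvd_mirrorMap _ τ) (mirrorMap_contraction _ τ)),
    fun Y hY n hn => ?_⟩
  obtain ⟨m, rfl⟩ := Nat.exists_eq_add_of_le' hn
  have hcoeff := succ_mul_coeff_succ_of_mirrorMap_eq (by simpa using Polynomial.X_ne_C (1 : ℚ))
    ((mirrorEq_iff_mirrorMap_eq τ Y).mp hY) m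
  rw [Nat.add_sub_cancel, ← neg_neg (∑ i ∈ _, _), ← phiPowCoeff_X_succ, ← hcoeff,
    mul_neg, ← neg_mul, ← map_neg, neg_neg, ← mul_assoc,
    show (m : Rq) + 1 = Polynomial.C ((m + 1 : ℕ) : ℚ) by simp, ← map_mul,
    one_div_mul_cancel (by positivity), map_one, one_mul]
end
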